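/- arXiv:1910.03471 — 4 statements merged into one kernel-verified Lean document; each statement's English description precedes it below -/
import Mathlib

section
/- Let (W_t)_{t\ge 1} be a sequence of real M\times M matrices converging to W^* with c := \|W^*\|_2 < 1, let q \ge 0, and let (b_t)_{t\ge 1} in \mathbb{R}^M satisfy \|b_t\| \le q for all t. Then any sequence (g_t)_{t\ge 1} in \mathbb{R}^M satisfying g_{t+1} = b_t + W_t g_t for all t \ge 1 is bounded, and moreover \limsup_{T\to\infty} \|g_T\| \le q/(1-c). -/
/-!
The norms satisfy `‖g (t+1)‖ ≤ q + ‖W t‖₂ ‖g t‖` and `‖W t‖₂ → c`, so for every `c' ∈ (c, 1)`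
eventually `‖g (t+1)‖ ≤ q + c' ‖g t‖`. With a fixed factor `c'`, the excess of `‖g t‖` over the
fixed point `q / (1 - c')` of `x ↦ q + c' x` decays like `c' ^ t`, which gives boundedness and
`limsup ‖g t‖ ≤ q / (1 - c')`; then let `c' ↓ c`.
-/

open Matrix Filter Topology

/-- The operator 2-norm (largest singular value) of a real matrix. -/
noncomputable def opNorm2 {m n : Type*} [Fintype m] [Fintype n] [DecidableEq n]
    (A : Matrix m n ℝ) : ℝ :=
  ‖LinearMap.toContinuousLinearMap (Matrix.toEuclideanLin (𝕜 := ℝ) A)‖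

/-- Euclidean norm of a real vector. -/
noncomputable def vnorm {n : Type*} [Fintype n] (v : n → ℝ) : ℝ :=
  Real.sqrt (∑ i, v i ^ 2)

lemma vnorm_eq_norm_toLp {n : Type*} [Fintype n] (v : n → ℝ) :
    vnorm v = ‖WithLp.toLp 2 v‖ := by
  simp only [vnorm, EuclideanSpace.norm_eq, Real.norm_eq_abs, sq_abs]

lemma vnorm_nonneg {n : Type*} [Fintype n] (v : n → ℝ) : 0 ≤ vnorm v :=
  Real.sqrt_nonneg _

lemma vnorm_add_le {n : Type*} [Fintype n] (v w : n → ℝ) :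
    vnorm (v + w) ≤ vnorm v + vnorm w := by
  simpa only [vnorm_eq_norm_toLp, WithLp.toLp_add] using norm_add_le _ _

lemma vnorm_mulVec_le {m n : Type*} [Fintype m] [Fintype n] [DecidableEq n]
    (A : Matrix m n ℝ) (v : n → ℝ) : vnorm (A *ᵥ v) ≤ opNorm2 A * vnorm v := by
  rw [vnorm_eq_norm_toLp, vnorm_eq_norm_toLp]
  exact (LinearMap.toContinuousLinearMap (Matrix.toEuclideanLin A)).le_opNorm (WithLp.toLp 2 v)

lemma opNorm2_nonneg {m n : Type*} [Fintype m] [Fintype n] [DecidableEq n]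
    (A : Matrix m n ℝ) : 0 ≤ opNorm2 A :=
  norm_nonneg _

lemma continuous_opNorm2 {m n : Type*} [Fintype m] [Fintype n] [DecidableEq n] :
    Continuous (opNorm2 : Matrix m n ℝ → ℝ) :=
  continuous_norm.comp <| LinearMap.continuous_of_finiteDimensional
    ((LinearMap.toContinuousLinearMap : _ ≃ₗ[ℝ] _).toLinearMap.comp
      (Matrix.toEuclideanLin (𝕜 := ℝ) (m := m) (n := n)).toLinearMap)

lemma le_div_one_sub_add_pow_mul_of_le_add_mul {u : ℕ → ℝ} {q c : ℝ} (hc0 : 0 ≤ c)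
    (hc1 : c < 1) {T : ℕ} (hrec : ∀ t ≥ T, u (t + 1) ≤ q + c * u t) (n : ℕ) :
    u (T + n) ≤ q / (1 - c) + c ^ n * (u T - q / (1 - c)) := by
  set p := q / (1 - c)
  have hp : q = p * (1 - c) := (div_mul_cancel₀ q (sub_pos.2 hc1).ne').symm
  have hgeom := le_geom (u := fun k => u (T + k) - p) hc0 n fun k _ => by
    have hstep := hrec (T + k) (Nat.le_add_right T k)
    rw [hp] at hstep
    rw [← add_assoc]
    linear_combination hstep
  simp only [add_zero] at hgeom
  linarith

lemma isBoundedUnder_le_and_limsup_le_of_eventually_le_add_mul {u : ℕ → ℝ} {q c : ℝ}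
    (hu : IsBoundedUnder (· ≥ ·) atTop u) (hc0 : 0 ≤ c) (hc1 : c < 1)
    (hrec : ∀ᶠ t in atTop, u (t + 1) ≤ q + c * u t) :
    IsBoundedUnder (· ≤ ·) atTop u ∧ limsup u atTop ≤ q / (1 - c) := by
  obtain ⟨T, hT⟩ := eventually_atTop.1 hrec
  set w : ℕ → ℝ := fun t => q / (1 - c) + c ^ (t - T) * (u T - q / (1 - c))
  have hw : Tendsto w atTop (𝓝 (q / (1 - c))) := by
    simpa using tendsto_const_nhds.add
      (((tendsto_pow_atTop_nhds_zero_of_lt_one hc0 hc1).comp (tendsto_sub_atTop_nat T)).mul_const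
        (u T - q / (1 - c)))
  have hle : u ≤ᶠ[atTop] w := by
    filter_upwards [eventually_ge_atTop T] with t ht
    obtain ⟨n, rfl⟩ := Nat.exists_eq_add_of_le ht
    simpa [w] using le_div_one_sub_add_pow_mul_of_le_add_mul hc0 hc1 hT n
  exact ⟨hw.isBoundedUnder_le.mono_le hle,
    (limsup_le_limsup hle hu.isCoboundedUnder_le hw.isBoundedUnder_le).trans hw.limsup_eq.le⟩

lemma isBoundedUnder_le_and_limsup_le_of_le_add_mul_of_tendsto {u a : ℕ → ℝ} {q c : ℝ}
    (hu : ∀ t, 0 ≤ u t) (ha : Tendsto a atTop (𝓝 c)) (hc0 : 0 ≤ c) (hc1 : c < 1)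
    (hrec : ∀ᶠ t in atTop, u (t + 1) ≤ q + a t * u t) :
    IsBoundedUnder (· ≤ ·) atTop u ∧ limsup u atTop ≤ q / (1 - c) := by
  have hfactor : ∀ c' ∈ Set.Ioo c 1,
      IsBoundedUnder (· ≤ ·) atTop u ∧ limsup u atTop ≤ q / (1 - c') := fun c' hc' =>
    isBoundedUnder_le_and_limsup_le_of_eventually_le_add_mul
      (isBoundedUnder_of_eventually_ge (.of_forall hu)) (hc0.trans hc'.1.le) hc'.2 <| by
        filter_upwards [hrec, ha.eventually (gt_mem_nhds hc'.1)] with t ht hat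
        exact ht.trans (by gcongr; exact hu t)
  have hlim : Tendsto (fun c' => q / (1 - c')) (𝓝[>] c) (𝓝 (q / (1 - c))) :=
    tendsto_nhdsWithin_of_tendsto_nhds <|
      (continuousAt_const.div (continuousAt_const.sub continuousAt_id) (by simp; linarith)).tendsto
  refine ⟨(hfactor ((c + 1) / 2) ⟨by linarith, by linarith⟩).1, ge_of_tendsto hlim ?_⟩
  filter_upwards [Ioo_mem_nhdsGT hc1] with c' hc' using (hfactor c' hc').2

theorem perturbed_linear_recursion_bounded_general {M : ℕ}
    (W : ℕ → Matrix (Fin M) (Fin M) ℝ) (Wstar : Matrix (Fin M) (Fin M) ℝ)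
    (hconv : Tendsto W atTop (𝓝 Wstar)) (hc : opNorm2 Wstar < 1)
    (q : ℝ) (b : ℕ → Fin M → ℝ) (hb : ∀ t, 1 ≤ t → vnorm (b t) ≤ q)
    (g : ℕ → Fin M → ℝ)
    (hg : ∀ t, 1 ≤ t → g (t + 1) = b t + (W t).mulVec (g t)) :
    (∃ C : ℝ, ∀ t, vnorm (g t) ≤ C) ∧
      Filter.limsup (fun T => vnorm (g T)) atTop ≤ q / (1 - opNorm2 Wstar) := by
  have hrec : ∀ᶠ t in atTop, vnorm (g (t + 1)) ≤ q + opNorm2 (W t) * vnorm (g t) := by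
    filter_upwards [eventually_ge_atTop 1] with t ht
    calc vnorm (g (t + 1)) = vnorm (b t + W t *ᵥ g t) := by rw [hg t ht]
      _ ≤ vnorm (b t) + vnorm (W t *ᵥ g t) := vnorm_add_le _ _
      _ ≤ q + opNorm2 (W t) * vnorm (g t) := add_le_add (hb t ht) (vnorm_mulVec_le _ _)
  obtain ⟨hbdd, hlimsup⟩ := isBoundedUnder_le_and_limsup_le_of_le_add_mul_of_tendsto
    (fun t => vnorm_nonneg _) ((continuous_opNorm2.tendsto Wstar).comp hconv) (opNorm2_nonneg _)
    hc hrec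
  obtain ⟨C, hC⟩ := hbdd.bddAbove_range
  exact ⟨⟨C, fun t => hC ⟨t, rfl⟩⟩, hlimsup⟩

/-- if `W t → W*` with `c := ‖W*‖₂ < 1`, `q ≥ 0` and `‖b t‖ ≤ q` for all `t ≥ 1`,
then any sequence with `g (t+1) = b t + W t * g t` for `t ≥ 1` is bounded, with
`limsup ‖g T‖ ≤ q / (1 - c)`. -/
theorem perturbed_linear_recursion_bounded {M : ℕ}
    (W : ℕ → Matrix (Fin M) (Fin M) ℝ) (Wstar : Matrix (Fin M) (Fin M) ℝ)
    (hconv : Tendsto W atTop (𝓝 Wstar)) (hc : opNorm2 Wstar < 1)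
    (q : ℝ) (hq : 0 ≤ q) (b : ℕ → Fin M → ℝ) (hb : ∀ t, 1 ≤ t → vnorm (b t) ≤ q)
    (g : ℕ → Fin M → ℝ)
    (hg : ∀ t, 1 ≤ t → g (t + 1) = b t + (W t).mulVec (g t)) :
    (∃ C : ℝ, ∀ t, vnorm (g t) ≤ C) ∧
      Filter.limsup (fun T => vnorm (g T)) atTop ≤ q / (1 - opNorm2 Wstar) :=
  perturbed_linear_recursion_bounded_general W Wstar hconv hc q b hb g hg
end

section
/- (Theorem 1, k-cycle case, vanishing of Jacobian products.) Let (z_t)_{t\ge 1} be an orbit of F, i.e. z_{t+1} = F(z_t). Suppose there exist k \ge 1 pairwise distinct points p_0, \dots, p_{k-1} \in \mathbb{R}^M with F(p_s) = p_{(s+1) \bmod k}, none of which has any zero component, such that for each residue s \in \{0,\dots,k-1\} the subsequence (z_{nk+s})_{n\ge 1} converges to one of the points p_0,\dots,p_{k-1}, and suppose \max_{0\le s\le k-1} \|W_\Omega(p_s)\|_2 < 1. Then the ordered products of Jacobians satisfy \lim_{T\to\infty} W_\Omega(z_{T-1})\, W_\Omega(z_{T-2}) \cdots W_\Omega(z_1)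 = 0. -/
open Matrix Filter Topology

/-- Componentwise ReLU. -/
noncomputable def relu {n : Type*} (z : n → ℝ) : n → ℝ := fun i => max 0 (z i)

/-- `Dmat z` is the diagonal 0–1 matrix with `(Dmat z) i i = 1` iff `z i > 0`. -/
noncomputable def Dmat {n : Type*} [Fintype n] [DecidableEq n] (z : n → ℝ) :
    Matrix n n ℝ :=
  Matrix.diagonal (fun i => if 0 < z i then (1 : ℝ) else 0)

/-- `W_Ω(z) = A + W D(z)`. -/
noncomputable def Wom {n : Type*} [Fintype n] [DecidableEq n]
    (A W : Matrix n n ℝ) (z : n → ℝ) : Matrix n n ℝ :=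
  A + W * Dmat z

/-- The deterministic, input-free PLRNN map `F(z) = A z + W φ(z) + h`. -/
noncomputable def plrnn {n : Type*} [Fintype n] [DecidableEq n]
    (A W : Matrix n n ℝ) (h : n → ℝ) (z : n → ℝ) : n → ℝ :=
  A.mulVec z + W.mulVec (relu z) + h

/-!
Since no point of the cycle has a zero coordinate, `D` is locally constant near each `p s`, so
along every residue class the Jacobian `W_Ω(z t)` eventually equals some `W_Ω(p j)` and has norm
at most `c := max_s ‖W_Ω(p s)‖₂ < 1`. Submultiplicativity of the norm then makes the tail of the
product decay like `c ^ T`.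
-/

section JacobianProducts

open scoped Matrix.Norms.L2Operator

lemma list_prod_range_succ_map_sub {R : Type*} [Monoid R] (f : ℕ → R) (n : ℕ) :
    ((List.range (n + 1)).map fun i => f (n + 1 - i)).prod
      = f (n + 1) * ((List.range n).map fun i => f (n - i)).prod := by
  rw [List.range_succ_eq_map, List.map_cons, List.prod_cons, List.map_map]
  simp only [Nat.sub_zero, Function.comp_def, Nat.succ_sub_succ]

lemma tendsto_list_prod_range_map_sub_of_norm_le {R : Type*} [SeminormedRing R]
    {f : ℕ → R} {c : ℝ} (hc : c < 1) (hf : ∀ᶠ t in atTop, ‖f t‖ ≤ c) :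
    Tendsto (fun n => ((List.range n).map fun i => f (n - i)).prod) atTop (𝓝 0) := by
  set Q : ℕ → R := fun n => ((List.range n).map fun i => f (n - i)).prod
  obtain ⟨N, hN⟩ := eventually_atTop.mp hf
  have hc₀ : 0 ≤ c := (norm_nonneg _).trans (hN N le_rfl)
  have hgeom : ∀ m, ‖Q (N + m)‖ ≤ c ^ m * ‖Q N‖ := by
    intro m
    induction m with
    | zero => simp
    | succ m ih =>
      calc ‖Q (N + (m + 1))‖ = ‖f (N + m + 1) * Q (N + m)‖ :=
            congrArg norm (list_prod_range_succ_map_sub f (N + m))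
        _ ≤ ‖f (N + m + 1)‖ * ‖Q (N + m)‖ := norm_mul_le _ _
        _ ≤ c * (c ^ m * ‖Q N‖) :=
            mul_le_mul (hN _ (by omega)) ih (norm_nonneg _) hc₀
        _ = c ^ (m + 1) * ‖Q N‖ := by ring
  have hbound : ∀ᶠ n in atTop, ‖Q n‖ ≤ c ^ (n - N) * ‖Q N‖ := by
    filter_upwards [eventually_ge_atTop N] with n hn
    simpa [Nat.add_sub_cancel' hn] using hgeom (n - N)
  have hlim : Tendsto (fun n => c ^ (n - N) * ‖Q N‖) atTop (𝓝 0) := by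
    simpa using ((tendsto_pow_atTop_nhds_zero_of_lt_one hc₀ hc).comp
      (tendsto_sub_atTop_nat N)).mul_const ‖Q N‖
  exact tendsto_zero_iff_norm_tendsto_zero.mpr
    (squeeze_zero' (Eventually.of_forall fun _ => norm_nonneg _) hbound hlim)

lemma eventually_atTop_of_forall_residues {k : ℕ} (hk : 0 < k) {P : ℕ → Prop}
    (h : ∀ s : Fin k, ∀ᶠ n in atTop, P (n * k + s)) : ∀ᶠ t in atTop, P t := by
  filter_upwards [(Nat.tendsto_div_const_atTop hk.ne').eventually (eventually_all.mpr h)]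
    with t ht
  simpa [Nat.div_add_mod'] using ht ⟨t % k, Nat.mod_lt t hk⟩

variable {n : Type*} [Fintype n] [DecidableEq n]

lemma Dmat_eventuallyEq_nhds {p : n → ℝ} (hp : ∀ i, p i ≠ 0) :
    Dmat =ᶠ[𝓝 p] fun _ => Dmat p := by
  have hsign : ∀ᶠ x in 𝓝 p, ∀ i, (0 < x i ↔ 0 < p i) := by
    refine eventually_all.mpr fun i => ?_
    have hcont := (continuous_apply i).tendsto p
    rcases (hp i).lt_or_gt with hneg | hpos
    · filter_upwards [hcont.eventually (eventually_lt_nhds hneg)] with x hx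
      exact iff_of_false hx.not_gt hneg.not_gt
    · filter_upwards [hcont.eventually (eventually_gt_nhds hpos)] with x hx
      exact iff_of_true hx hpos
  filter_upwards [hsign] with x hx
  simp only [Dmat, hx]

lemma Wom_eventuallyEq_nhds (A W : Matrix n n ℝ) {p : n → ℝ} (hp : ∀ i, p i ≠ 0) :
    Wom A W =ᶠ[𝓝 p] fun _ => Wom A W p :=
  (Dmat_eventuallyEq_nhds hp).mono fun x hx => by simp only [Wom, hx]

lemma opNorm2_eq_norm {m : Type*} [Fintype m] (B : Matrix m n ℝ) : opNorm2 B = ‖B‖ := rfl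

end JacobianProducts

theorem jacobian_products_vanish_cycle_general {M : ℕ} (A W : Matrix (Fin M) (Fin M) ℝ)
    (z : ℕ → Fin M → ℝ)
    (k : ℕ) (hk : 0 < k) (p : Fin k → Fin M → ℝ)
    (hnz : ∀ (s : Fin k) (i : Fin M), p s i ≠ 0)
    (hsub : ∀ s : Fin k, ∃ j : Fin k,
      Tendsto (fun n : ℕ => z (n * k + (s : ℕ))) atTop (𝓝 (p j)))
    (hnorm : ∀ s : Fin k, opNorm2 (Wom A W (p s)) < 1) :
    Tendsto (fun T => ((List.range (T - 1)).map (fun i => Wom A W (z (T - 1 - i)))).prod)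
      atTop (𝓝 0) := by
  open scoped Matrix.Norms.L2Operator in
  have : Nonempty (Fin k) := ⟨⟨0, hk⟩⟩
  simp only [opNorm2_eq_norm] at hnorm
  obtain ⟨s₀, hs₀⟩ := Finite.exists_max fun s => ‖Wom A W (p s)‖
  have hcontract : ∀ᶠ t in atTop, ‖Wom A W (z t)‖ ≤ ‖Wom A W (p s₀)‖ := by
    refine eventually_atTop_of_forall_residues hk fun s => ?_
    obtain ⟨j, hj⟩ := hsub s
    filter_upwards [hj.eventually (Wom_eventuallyEq_nhds A W (hnz j))] with n hn
    rw [hn]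
    exact hs₀ j
  exact (tendsto_list_prod_range_map_sub_of_norm_le (hnorm s₀) hcontract).comp
    (tendsto_sub_atTop_nat 1)

/-- Theorem 1, k-cycle case, vanishing of Jacobian products: if the orbit
`z` converges (along each residue class mod `k`) to a stable `k`-cycle
`p 0, …, p (k-1)` of pairwise distinct points with no zero component, with
`‖W_Ω(p s)‖₂ < 1` for every `s`, then the ordered Jacobian products
`W_Ω(z (T-1)) ⋯ W_Ω(z 1)` tend to `0` as `T → ∞`. -/
theorem jacobian_products_vanish_cycle {M : ℕ} (A W : Matrix (Fin M) (Fin M) ℝ)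
    (hA : A.IsDiag) (hWd : ∀ i, W i i = 0) (h : Fin M → ℝ)
    (z : ℕ → Fin M → ℝ) (horb : ∀ t, 1 ≤ t → z (t + 1) = plrnn A W h (z t))
    (k : ℕ) (hk : 0 < k) (p : Fin k → Fin M → ℝ) (hinj : Function.Injective p)
    (hcyc : ∀ s : Fin k, plrnn A W h (p s) = p ⟨((s : ℕ) + 1) % k, Nat.mod_lt _ hk⟩)
    (hnz : ∀ (s : Fin k) (i : Fin M), p s i ≠ 0)
    (hsub : ∀ s : Fin k, ∃ j : Fin k,
      Tendsto (fun n : ℕ => z (n * k + (s : ℕ))) atTop (𝓝 (p j)))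
    (hnorm : ∀ s : Fin k, opNorm2 (Wom A W (p s)) < 1) :
    Tendsto (fun T => ((List.range (T - 1)).map (fun i => Wom A W (z (T - 1 - i)))).prod)
      atTop (𝓝 0) :=
  jacobian_products_vanish_cycle_general A W z k hk p hnz hsub hnorm
end

section
/- Let (R_t)_{t\ge 1} be real q\times q matrices converging to R^* with \|R^*\|_2 < 1, and let (b_t)_{t\ge 1} in \mathbb{R}^{q\times p} converge to b^*. Then any sequence (x_t)_{t\ge 1} of q\times p real matrices satisfying x_{t+1} = b_{t+1} + R_{t+1} x_t for all t \ge 1 converges, and its limit is x^* = (I_q - R^*)^{-1} b^* (the matrix I_q - R^* being invertible since \|R^*\|_2 < 1). -/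
open Matrix Filter Topology

/-!
The error `e t = x t - x*` obeys `e (t+1) = R (t+1) e t + ε (t+1)` with `ε t → 0`, because `x*` is
the fixed point `x* = b* + R* x*`. Eventually `‖R t‖ ≤ r` for some `r < 1`, so
`‖e (t+1)‖ ≤ r ‖e t‖ + ‖ε (t+1)‖`, and such a perturbed contraction tends to `0`: once
`‖ε‖ ≤ (1 - r) δ`, the excess `‖e t‖ - δ` is dominated by a geometric sequence.
-/

theorem sub_le_pow_mul_sub_of_le_mul_add {u : ℕ → ℝ} {r δ : ℝ} {N : ℕ} (hr : 0 ≤ r)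
    (h : ∀ n ≥ N, u (n + 1) ≤ r * u n + (1 - r) * δ) :
    ∀ n ≥ N, u n - δ ≤ r ^ (n - N) * (u N - δ) := by
  intro n hn
  induction n, hn using Nat.le_induction with
  | base => simp
  | succ n hn ih =>
    calc u (n + 1) - δ ≤ r * (u n - δ) := by linarith [h n hn]
      _ ≤ r * (r ^ (n - N) * (u N - δ)) := mul_le_mul_of_nonneg_left ih hr
      _ = r ^ (n + 1 - N) * (u N - δ) := by rw [Nat.sub_add_comm hn, pow_succ]; ring

theorem tendsto_zero_of_le_mul_add {u ε : ℕ → ℝ} {r : ℝ} (hr₀ : 0 ≤ r) (hr₁ : r < 1)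
    (hu : ∀ n, 0 ≤ u n) (hε : Tendsto ε atTop (𝓝 0))
    (h : ∀ᶠ n in atTop, u (n + 1) ≤ r * u n + ε n) : Tendsto u atTop (𝓝 0) := by
  refine tendsto_order.2 ⟨fun a ha => .of_forall fun n => ha.trans_le (hu n), fun c hc => ?_⟩
  have hδ : 0 < (1 - r) * (c / 2) := mul_pos (sub_pos.2 hr₁) (half_pos hc)
  obtain ⟨N, hN⟩ := eventually_atTop.1 (h.and (hε.eventually (ge_mem_nhds hδ)))
  have hbound := sub_le_pow_mul_sub_of_le_mul_add (δ := c / 2) hr₀ fun n hn =>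
    (hN n hn).1.trans (add_le_add_right (hN n hn).2 _)
  have hdecay : Tendsto (fun n => r ^ (n - N) * (u N - c / 2)) atTop (𝓝 0) := by
    simpa using ((tendsto_pow_atTop_nhds_zero_of_lt_one hr₀ hr₁).comp
      (tendsto_sub_atTop_nat N)).mul_const (u N - c / 2)
  filter_upwards [eventually_ge_atTop N, hdecay.eventually (gt_mem_nhds (half_pos hc))]
    with n hn hsmall
  linarith [hbound n hn]

namespace ContinuousLinearMap

variable {𝕜 E : Type*} [NontriviallyNormedField 𝕜] [NormedAddCommGroup E] [NormedSpace 𝕜 E]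

theorem tendsto_of_affine_recursion {T : ℕ → E →L[𝕜] E} {T' : E →L[𝕜] E}
    (hT : Tendsto T atTop (𝓝 T')) (hT' : ‖T'‖ < 1) {b : ℕ → E} {b' : E}
    (hb : Tendsto b atTop (𝓝 b')) {x : ℕ → E} {x' : E} (hx' : x' = b' + T' x')
    (hx : ∀ᶠ t in atTop, x (t + 1) = b (t + 1) + T (t + 1) (x t)) :
    Tendsto x atTop (𝓝 x') := by
  obtain ⟨r, hT'r, hr₁⟩ := exists_between hT'
  set ε : ℕ → ℝ := fun t => ‖b t - b'‖ + ‖T t x' - T' x'‖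
  have hε : Tendsto ε atTop (𝓝 0) := by
    have hTx : Tendsto (fun t => T t x') atTop (𝓝 (T' x')) :=
      ((apply 𝕜 E x').continuous.tendsto T').comp hT
    simpa using (tendsto_iff_norm_sub_tendsto_zero.1 hb).add
      (tendsto_iff_norm_sub_tendsto_zero.1 hTx)
  have hstep : ∀ᶠ t in atTop, ‖x (t + 1) - x'‖ ≤ r * ‖x t - x'‖ + ε (t + 1) := by
    filter_upwards [hx, (hT.comp (tendsto_add_atTop_nat 1)).norm.eventually (gt_mem_nhds hT'r)]
      with t hxt hTt
    have herr : x (t + 1) - x' =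
        T (t + 1) (x t - x') + ((b (t + 1) - b') + (T (t + 1) x' - T' x')) :=
      calc x (t + 1) - x' = b (t + 1) + T (t + 1) (x t) - (b' + T' x') := by rw [hxt, ← hx']
        _ = _ := by rw [map_sub]; abel
    calc ‖x (t + 1) - x'‖ ≤ ‖T (t + 1)‖ * ‖x t - x'‖ + ε (t + 1) := by
          rw [herr]
          exact (norm_add_le _ _).trans (add_le_add (le_opNorm _ _) (norm_add_le _ _))
      _ ≤ r * ‖x t - x'‖ + ε (t + 1) := by gcongr; exact hTt.le
  exact tendsto_iff_norm_sub_tendsto_zero.2 <| tendsto_zero_of_le_mul_add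
    ((norm_nonneg _).trans hT'r.le) hr₁ (fun t => norm_nonneg _)
    (hε.comp (tendsto_add_atTop_nat 1)) hstep

end ContinuousLinearMap

namespace Matrix

open scoped Matrix.Norms.L2Operator

variable {𝕜 m n : Type*} [RCLike 𝕜] [Fintype m] [Fintype n] [DecidableEq m] [DecidableEq n]

noncomputable def mulLeftL : Matrix m m 𝕜 →L[𝕜] Matrix m n 𝕜 →L[𝕜] Matrix m n 𝕜 :=
  LinearMap.mkContinuous₂
    (LinearMap.mk₂ 𝕜 (· * ·) Matrix.add_mul Matrix.smul_mul Matrix.mul_add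
      fun c A B => Matrix.mul_smul A c B) 1
    fun A B => by simpa only [LinearMap.mk₂_apply, one_mul] using l2_opNorm_mul A B

theorem norm_mulLeftL_apply_le (A : Matrix m m 𝕜) : ‖mulLeftL (n := n) A‖ ≤ ‖A‖ :=
  ContinuousLinearMap.opNorm_le_bound _ (norm_nonneg A) (l2_opNorm_mul A)

theorem tendsto_of_affine_recursion {R : ℕ → Matrix m m 𝕜} {R' : Matrix m m 𝕜}
    (hR : Tendsto R atTop (𝓝 R')) (hR' : ‖R'‖ < 1) {b : ℕ → Matrix m n 𝕜} {b' : Matrix m n 𝕜}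
    (hb : Tendsto b atTop (𝓝 b')) {x : ℕ → Matrix m n 𝕜}
    (hx : ∀ᶠ t in atTop, x (t + 1) = b (t + 1) + R (t + 1) * x t) :
    Tendsto x atTop (𝓝 ((1 - R')⁻¹ * b')) := by
  have hdet : IsUnit (1 - R').det :=
    (isUnit_iff_isUnit_det _).1 (isUnit_one_sub_of_norm_lt_one hR')
  have hfix : (1 - R')⁻¹ * b' - R' * ((1 - R')⁻¹ * b') = b' := by
    simpa only [Matrix.sub_mul, Matrix.one_mul] using mul_nonsing_inv_cancel_left (1 - R') b' hdet
  exact ContinuousLinearMap.tendsto_of_affine_recursion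
    ((mulLeftL.continuous.tendsto R').comp hR) ((norm_mulLeftL_apply_le R').trans_lt hR') hb
    (eq_add_of_sub_eq hfix : _ = b' + mulLeftL R' _) hx

end Matrix

/-- if `R t → R*` with `‖R*‖₂ < 1` and `b t → b*`, then any sequence of
`q × p` matrices with `x (t+1) = b (t+1) + R (t+1) * x t` converges to
`x* = (I - R*)⁻¹ b*`. -/
theorem perturbed_affine_matrix_recursion_converges {p q : ℕ}
    (R : ℕ → Matrix (Fin q) (Fin q) ℝ) (Rstar : Matrix (Fin q) (Fin q) ℝ)
    (hR : Tendsto R atTop (𝓝 Rstar)) (hnorm : opNorm2 Rstar < 1)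
    (b : ℕ → Matrix (Fin q) (Fin p) ℝ) (bstar : Matrix (Fin q) (Fin p) ℝ)
    (hb : Tendsto b atTop (𝓝 bstar))
    (x : ℕ → Matrix (Fin q) (Fin p) ℝ)
    (hx : ∀ t, 1 ≤ t → x (t + 1) = b (t + 1) + R (t + 1) * x t) :
    Tendsto x atTop (𝓝 ((1 - Rstar)⁻¹ * bstar)) :=
  -- `opNorm2` is definitionally the norm of `Matrix.Norms.L2Operator`.
  Matrix.tendsto_of_affine_recursion hR hnorm hb (eventually_atTop.2 ⟨1, hx⟩)
end

section
/- (Exact 2-unit PLRNN solution of the addition problem.) Let T \ge 2 and let s_1, s_2 : \{1,\dots,T\} \to \mathbb{R} be input sequences with s_1(t) \in [0,1] for all t, s_2(t) \in \{0,1\} for all t, and s_2(t) = 1 exactly for t \in \{t_1, t_2\} where 1 \le t_1 < t_2 \le T-1. Define z(t) = (z_1(t), z_2(t)) \in \mathbb{R}^2 by z(0) = (0,0) and, for t = 1, \dots, T, z_1(t) = z_1(t-1) + \max(0, z_2(t-1)) and z_2(t) = s_1(t) + s_2(t) - 1 (this is the PLRNN z_t = A z_{t-1} + W \varphi(z_{t-1})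 + C s_t + h with A = [[1,0],[0,0]], W = [[0,1],[0,0]], h = (0,-1), C = [[0,0],[1,1]]). Then the output x_T = B z(T) with B = (1, 0) satisfies x_T = s_1(t_1) + s_1(t_2), i.e. the network exactly outputs the sum of the two inputs marked by the indicator bits. -/
/-- exact 2-unit PLRNN solution of the addition problem: with inputs
`s₁ t ∈ [0,1]` and indicator bits `s₂ t ∈ {0,1}` equal to `1` exactly at times
`t₁ < t₂ ≤ T - 1`, the 2-unit PLRNN
`z₁ t = z₁ (t-1) + max 0 (z₂ (t-1))`, `z₂ t = s₁ t + s₂ t - 1`, started at `z 0 = (0,0)`,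
outputs `x_T = z₁ T = s₁ t₁ + s₁ t₂`, the sum of the two indicated inputs. -/
theorem two_unit_plrnn_solves_addition (T : ℕ) (hT : 2 ≤ T)
    (s1 s2 : ℕ → ℝ) (t1 t2 : ℕ)
    (ht1 : 1 ≤ t1) (ht12 : t1 < t2) (ht2 : t2 ≤ T - 1)
    (hs1 : ∀ t, 1 ≤ t → t ≤ T → s1 t ∈ Set.Icc (0 : ℝ) 1)
    (hs2mem : ∀ t, 1 ≤ t → t ≤ T → (s2 t = 0 ∨ s2 t = 1))
    (hs2ind : ∀ t, 1 ≤ t → t ≤ T → (s2 t = 1 ↔ t = t1 ∨ t = t2))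
    (z1 z2 : ℕ → ℝ) (hz10 : z1 0 = 0) (hz20 : z2 0 = 0)
    (hrec : ∀ t, 1 ≤ t → t ≤ T →
      z1 t = z1 (t - 1) + max 0 (z2 (t - 1)) ∧ z2 t = s1 t + s2 t - 1) :
    z1 T = s1 t1 + s1 t2 := by
  have key : ∀ t, t ≤ T →
      z1 t = (if t1 < t then s1 t1 else 0) + (if t2 < t then s1 t2 else 0) := by
    intro t
    induction t with
    | zero =>
      intro _
      have h1 : ¬ t1 < 0 := Nat.not_lt_zero _
      have h2 : ¬ t2 < 0 := Nat.not_lt_zero _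
      simp [hz10, h1, h2]
    | succ n ih =>
      intro hle
      have hn : n ≤ T := Nat.le_of_succ_le hle
      have h1 : 1 ≤ n + 1 := Nat.succ_le_succ (Nat.zero_le n)
      obtain ⟨hrec1, -⟩ := hrec (n + 1) h1 hle
      simp only [Nat.add_sub_cancel] at hrec1
      have ihn := ih hn
      rcases Nat.eq_zero_or_pos n with h0 | hpos
      · subst h0
        have ha : ¬ t1 < 1 := by omega
        have hb : ¬ t2 < 1 := by omega
        simp [hrec1, hz10, hz20, ha, hb]
      · obtain ⟨-, hz2n⟩ := hrec n hpos hn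
        by_cases hcase : n = t1 ∨ n = t2
        · have hs2 : s2 n = 1 := (hs2ind n hpos hn).2 hcase
          have hs1n := hs1 n hpos hn
          have hmax : max 0 (z2 n) = s1 n := by
            rw [hz2n, hs2]
            have : s1 n + 1 - 1 = s1 n := by ring
            rw [this]
            exact max_eq_right hs1n.1
          rcases hcase with h | h
          · have e1 : ¬ t1 < n := by omega
            have e2 : ¬ t2 < n := by omega
            have e3 : t1 < n + 1 := by omega
            have e4 : ¬ t2 < n + 1 := by omega
            rw [hrec1, hmax, ihn, h]
            simp [e1, e2, e3, e4, show ¬ t2 < t1 from by omega,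
              show ¬ t2 < t1 + 1 from by omega]
          · have e1 : t1 < n := by omega
            have e2 : ¬ t2 < n := by omega
            have e3 : t1 < n + 1 := by omega
            have e4 : t2 < n + 1 := by omega
            rw [hrec1, hmax, ihn, h]
            simp [e1, e2, e3, e4, show t1 < t2 from ht12,
              show t1 < t2 + 1 from by omega]
        · push_neg at hcase
          have hs2 : s2 n = 0 := by
            rcases hs2mem n hpos hn with h | h
            · exact h
            · exact absurd ((hs2ind n hpos hn).1 h) (by tauto)
          have hmax : max 0 (z2 n) = 0 := by
            rw [hz2n, hs2]
            have hs1n := hs1 n hpos hn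
            have : s1 n + 0 - 1 ≤ 0 := by linarith [hs1n.2]
            exact max_eq_left this
          have e1 : (t1 < n + 1) ↔ (t1 < n) := by omega
          have e2 : (t2 < n + 1) ↔ (t2 < n) := by omega
          rw [hrec1, hmax, ihn, add_zero]
          simp only [e1, e2]
  have hf := key T le_rfl
  have e1 : t1 < T := by omega
  have e2 : t2 < T := by omega
  rw [hf, if_pos e1, if_pos e2]
end
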